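/- arXiv:2403.09389 — 2 statements merged into one kernel-verified Lean document; each statement's English description precedes it below -/
import Mathlib

section
/- Let f : ℝ^d → ℝ be differentiable with β-Lipschitz gradient and bounded below. Let 0 < η < 1/β, let (v_t) be a sequence in ℝ^d with ∑_{t=0}^∞ |v_t|² < ∞, and define the iteration x_{t+1} = x_t − η ∇f(x_t) + v_t from any x_0. Then ∑_{t=0}^∞ |∇f(x_t)|² < ∞. -/
/-!
By the descent lemma for the `β`-Lipschitz gradient and Young's inequality, one perturbed step
satisfies `f x_{t+1} ≤ f x_t - c/2 ‖∇f x_t‖² + K ‖v_t‖²` with `c = η (1 - βη) > 0`.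
Summing telescopes: since `f` is bounded below and `∑ ‖v_t‖² < ∞`, the partial sums of
`‖∇f x_t‖²` stay bounded.
-/

open RealInnerProductSpace

section GradientDescent

variable {E : Type*} [NormedAddCommGroup E] [InnerProductSpace ℝ E] [CompleteSpace E]
  {f : E → ℝ} {β : ℝ}

theorem le_add_inner_gradient_add_sq (hf : Differentiable ℝ f)
    (hlip : ∀ x y, ‖gradient f x - gradient f y‖ ≤ β * ‖x - y‖) (x d : E) :
    f (x + d) ≤ f x + ⟪gradient f x, d⟫ + β / 2 * ‖d‖ ^ 2 := by
  set φ : ℝ → ℝ := fun t => f (x + t • d) - t * ⟪gradient f x, d⟫ - β / 2 * t ^ 2 * ‖d‖ ^ 2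
  have hφ : ∀ t, HasDerivAt φ
      (⟪gradient f (x + t • d), d⟫ - ⟪gradient f x, d⟫ - β * t * ‖d‖ ^ 2) t := by
    intro t
    have hline : HasDerivAt (fun t : ℝ => x + t • d) d t := by
      simpa using ((hasDerivAt_id t).smul_const d).const_add x
    have hcomp := (hasGradientAt_iff_hasFDerivAt.mp (hf _).hasGradientAt).comp_hasDerivAt t hline
    rw [InnerProductSpace.toDual_apply_apply] at hcomp
    refine ((hcomp.sub ((hasDerivAt_id t).mul_const _)).sub
      (((hasDerivAt_pow 2 t).const_mul (β / 2)).mul_const (‖d‖ ^ 2))).congr_deriv ?_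
    simp only [Nat.cast_ofNat]
    ring
  have hφ_nonpos : ∀ t ∈ interior (Set.Ici (0 : ℝ)),
      ⟪gradient f (x + t • d), d⟫ - ⟪gradient f x, d⟫ - β * t * ‖d‖ ^ 2 ≤ 0 := by
    intro t ht
    rw [interior_Ici, Set.mem_Ioi] at ht
    rw [sub_nonpos]
    calc ⟪gradient f (x + t • d), d⟫ - ⟪gradient f x, d⟫
        = ⟪gradient f (x + t • d) - gradient f x, d⟫ := (inner_sub_left _ _ _).symm
      _ ≤ ‖gradient f (x + t • d) - gradient f x‖ * ‖d‖ := real_inner_le_norm _ _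
      _ ≤ β * ‖x + t • d - x‖ * ‖d‖ := by gcongr; exact hlip _ _
      _ = β * t * ‖d‖ ^ 2 := by
        rw [add_sub_cancel_left, norm_smul, Real.norm_of_nonneg ht.le]; ring
  have hanti : AntitoneOn φ (Set.Ici 0) :=
    antitoneOn_of_hasDerivWithinAt_nonpos (convex_Ici 0)
      (fun t _ => (hφ t).continuousAt.continuousWithinAt)
      (fun t _ => (hφ t).hasDerivWithinAt) hφ_nonpos
  have := hanti Set.self_mem_Ici (Set.mem_Ici.mpr zero_le_one) zero_le_one
  simp only [φ, zero_smul, one_smul, add_zero] at this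
  linarith

theorem perturbed_gradient_step_le (hβ : 0 ≤ β) (hf : Differentiable ℝ f)
    (hlip : ∀ x y, ‖gradient f x - gradient f y‖ ≤ β * ‖x - y‖) {η : ℝ} (hη : 0 < η)
    (hβη : β * η < 1) (x v : E) :
    f (x - η • gradient f x + v) ≤ f x - η * (1 - β * η) / 2 * ‖gradient f x‖ ^ 2
      + (1 / (2 * (η * (1 - β * η))) + β) * ‖v‖ ^ 2 := by
  set g := gradient f x
  set c := η * (1 - β * η)
  have hc : 0 < c := mul_pos hη (by linarith)
  have hdesc := le_add_inner_gradient_add_sq hf hlip x (v - η • g)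
  rw [← add_sub_assoc, add_sub_right_comm] at hdesc
  have hinner : ⟪g, v - η • g⟫ = ⟪g, v⟫ - η * ‖g‖ ^ 2 := by
    rw [inner_sub_right, inner_smul_right, real_inner_self_eq_norm_sq]
  have hnorm : ‖v - η • g‖ ^ 2 ≤ 2 * ‖v‖ ^ 2 + 2 * η ^ 2 * ‖g‖ ^ 2 := by
    have : ‖v - η • g‖ ≤ ‖v‖ + η * ‖g‖ := by
      simpa [norm_smul, abs_of_pos hη] using norm_sub_le v (η • g)
    nlinarith [norm_nonneg (v - η • g), sq_nonneg (‖v‖ - η * ‖g‖)]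
  have hyoung : ⟪g, v⟫ ≤ c / 2 * ‖g‖ ^ 2 + 1 / (2 * c) * ‖v‖ ^ 2 := by
    have key : c / 2 * ‖g‖ ^ 2 + 1 / (2 * c) * ‖v‖ ^ 2 - ‖g‖ * ‖v‖
        = (c * ‖g‖ - ‖v‖) ^ 2 / (2 * c) := by
      field_simp; ring
    have : 0 ≤ (c * ‖g‖ - ‖v‖) ^ 2 / (2 * c) := by positivity
    linarith [real_inner_le_norm g v]
  nlinarith [mul_le_mul_of_nonneg_left hnorm (by positivity : (0 : ℝ) ≤ β / 2)]

end GradientDescent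

theorem summable_of_le_sub_add {F a b : ℕ → ℝ} (hF : BddBelow (Set.range F))
    (ha : ∀ t, 0 ≤ a t) (hb : Summable b) (hstep : ∀ t, F (t + 1) ≤ F t - a t + b t) :
    Summable a := by
  obtain ⟨m, hm⟩ := hF
  obtain ⟨B, hB⟩ := hb.hasSum.tendsto_sum_nat.bddAbove_range
  refine summable_of_sum_range_le (c := F 0 - m + B) ha fun n => ?_
  calc ∑ t ∈ Finset.range n, a t
      ≤ ∑ t ∈ Finset.range n, ((F t - F (t + 1)) + b t) :=
        Finset.sum_le_sum fun t _ => by linarith [hstep t]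
    _ = F 0 - F n + ∑ t ∈ Finset.range n, b t := by
        rw [Finset.sum_add_distrib, Finset.sum_range_sub']
    _ ≤ F 0 - m + B := by linarith [hm ⟨n, rfl⟩, hB ⟨n, rfl⟩]

theorem stmt_0_general {d : ℕ} (f : EuclideanSpace ℝ (Fin d) → ℝ) (β η : ℝ)
    (hf : Differentiable ℝ f)
    (hlip : ∀ x y, ‖gradient f x - gradient f y‖ ≤ β * ‖x - y‖)
    (hbdd : BddBelow (Set.range f))
    (hη0 : 0 < η) (hηβ : η < 1 / β)
    (v x : ℕ → EuclideanSpace ℝ (Fin d))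
    (hv : Summable (fun t => ‖v t‖ ^ 2))
    (hx : ∀ t, x (t + 1) = x t - η • gradient f (x t) + v t) :
    Summable (fun t => ‖gradient f (x t)‖ ^ 2) := by
  have hβ : 0 < β := one_div_pos.mp (hη0.trans hηβ)
  have hβη : β * η < 1 := by rwa [lt_div_iff₀ hβ, mul_comm] at hηβ
  have hc : 0 < η * (1 - β * η) / 2 := div_pos (mul_pos hη0 (sub_pos.mpr hβη)) two_pos
  have hsum := summable_of_le_sub_add (F := f ∘ x) (hbdd.mono (Set.range_comp_subset_range x f))
    (fun t => by positivity) (hv.mul_left _)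
    (fun t => (hx t).symm ▸ perturbed_gradient_step_le hβ.le hf hlip hη0 hβη (x t) (v t))
  exact (summable_mul_left_iff hc.ne').mp hsum

theorem stmt_0 {d : ℕ} (f : EuclideanSpace ℝ (Fin d) → ℝ) (β η : ℝ) (hβ : 0 < β)
    (hf : Differentiable ℝ f)
    (hlip : ∀ x y, ‖gradient f x - gradient f y‖ ≤ β * ‖x - y‖)
    (hbdd : BddBelow (Set.range f))
    (hη0 : 0 < η) (hηβ : η < 1 / β)
    (v x : ℕ → EuclideanSpace ℝ (Fin d))
    (hv : Summable (fun t => ‖v t‖ ^ 2))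
    (hx : ∀ t, x (t + 1) = x t - η • gradient f (x t) + v t) :
    Summable (fun t => ‖gradient f (x t)‖ ^ 2) :=
  stmt_0_general f β η hf hlip hbdd hη0 hηβ v x hv hx
end

section
/- Under the same hypotheses (f β-smooth and bounded below, 0 < η < 1/β, ∑|v_t|² < ∞, x_{t+1} = x_t − η∇f(x_t) + v_t), the gradient converges to zero: lim_{t→∞} ∇f(x_t) = 0. -/
/-!
By the descent lemma, a perturbed gradient step with `η ≤ 1 / β` decreases `f` sufficiently:
`f (x_{t+1}) + η / 2 * ‖∇f (x_t)‖² ≤ f (x_t) + ‖v_t‖² / (2η)`.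
Telescoping, and using that `f` is bounded below and `∑ ‖v_t‖² < ∞`, gives `∑ ‖∇f (x_t)‖² < ∞`,
so `∇f (x_t) → 0`.
-/

open Filter

open Finset RealInnerProductSpace
open scoped Gradient

section Descent

variable {E : Type*} [NormedAddCommGroup E] [InnerProductSpace ℝ E] [CompleteSpace E]
  {f : E → ℝ} {β : ℝ}

theorem HasGradientAt.hasDerivAt_comp_add_smul {g x u : E} {t : ℝ}
    (h : HasGradientAt f g (x + t • u)) :
    HasDerivAt (fun s : ℝ => f (x + s • u)) ⟪g, u⟫ t := by
  have hline : HasDerivAt (fun s : ℝ => x + s • u) u t := by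
    simpa using ((hasDerivAt_id t).smul_const u).const_add x
  exact h.hasFDerivAt.comp_hasDerivAt t hline

theorem image_le_of_lipschitz_gradient (hf : Differentiable ℝ f)
    (hlip : ∀ x y, ‖∇ f x - ∇ f y‖ ≤ β * ‖x - y‖) (x y : E) :
    f y ≤ f x + ⟪∇ f x, y - x⟫ + β / 2 * ‖y - x‖ ^ 2 := by
  set u := y - x
  have hline (t : ℝ) : HasDerivAt (fun s : ℝ => f (x + s • u)) ⟪∇ f (x + t • u), u⟫ t :=
    (hf _).hasGradientAt.hasDerivAt_comp_add_smul
  have hslope : ∀ t, 0 ≤ t → ⟪∇ f (x + t • u), u⟫ ≤ ⟪∇ f x, u⟫ + β * ‖u‖ ^ 2 * t := by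
    intro t ht
    calc ⟪∇ f (x + t • u), u⟫ = ⟪∇ f x, u⟫ + ⟪∇ f (x + t • u) - ∇ f x, u⟫ := by
          rw [inner_sub_left]; ring
      _ ≤ ⟪∇ f x, u⟫ + β * ‖(x + t • u) - x‖ * ‖u‖ := by
          gcongr
          exact (real_inner_le_norm _ _).trans (by gcongr; exact hlip _ _)
      _ = ⟪∇ f x, u⟫ + β * ‖u‖ ^ 2 * t := by
          rw [add_sub_cancel_left, norm_smul, Real.norm_of_nonneg ht]; ring
  have hmodel (t : ℝ) : HasDerivAt (fun s : ℝ => f x + s * ⟪∇ f x, u⟫ + β * ‖u‖ ^ 2 / 2 * s ^ 2)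
      (⟪∇ f x, u⟫ + β * ‖u‖ ^ 2 * t) t := by
    refine ((((hasDerivAt_id t).mul_const ⟪∇ f x, u⟫).const_add (f x)).add
      ((hasDerivAt_pow 2 t).const_mul (β * ‖u‖ ^ 2 / 2))).congr_deriv ?_
    simp only [Nat.cast_ofNat]
    ring
  have hend := image_le_of_deriv_right_le_deriv_boundary (a := 0) (b := 1)
    (fun t _ => (hline t).continuousAt.continuousWithinAt) (fun t _ => (hline t).hasDerivWithinAt)
    (by simp) (fun t _ => (hmodel t).continuousAt.continuousWithinAt)
    (fun t _ => (hmodel t).hasDerivWithinAt) (fun t ht => hslope t ht.1)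
    (Set.right_mem_Icc.2 zero_le_one)
  simp only [one_smul, one_mul, one_pow, u, add_sub_cancel] at hend
  linarith

theorem image_gradient_step_add_le (hf : Differentiable ℝ f)
    (hlip : ∀ x y, ‖∇ f x - ∇ f y‖ ≤ β * ‖x - y‖) {η : ℝ} (hη : 0 < η) (hβη : β * η ≤ 1)
    (x v : E) :
    f (x - η • ∇ f x + v) + η / 2 * ‖∇ f x‖ ^ 2 ≤ f x + ‖v‖ ^ 2 / (2 * η) := by
  have hdescent := image_le_of_lipschitz_gradient hf hlip x (x - η • ∇ f x + v)
  rw [show x - η • ∇ f x + v - x = v - η • ∇ f x by abel] at hdescent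
  have hexpand : ⟪∇ f x, v - η • ∇ f x⟫ + β / 2 * ‖v - η • ∇ f x‖ ^ 2
      = (1 - β * η) * ⟪∇ f x, v⟫ - η * (1 - β * η / 2) * ‖∇ f x‖ ^ 2 + β / 2 * ‖v‖ ^ 2 := by
    rw [norm_sub_sq_real, inner_sub_right, real_inner_smul_right, real_inner_smul_right,
      real_inner_self_eq_norm_sq, real_inner_comm, norm_smul, Real.norm_of_nonneg hη.le]
    ring
  -- Young's inequality with weight `η`: after multiplying by `1 - βη` the `β`-terms cancel.
  have hyoung : ⟪∇ f x, v⟫ ≤ η / 2 * ‖∇ f x‖ ^ 2 + ‖v‖ ^ 2 / (2 * η) := by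
    have hsplit : η / 2 * ‖∇ f x‖ ^ 2 + ‖v‖ ^ 2 / (2 * η)
        = ((η * ‖∇ f x‖) ^ 2 + ‖v‖ ^ 2) / (2 * η) := by
      field_simp
    rw [hsplit, le_div_iff₀ (by positivity)]
    nlinarith [real_inner_le_norm (∇ f x) v, two_mul_le_add_sq (η * ‖∇ f x‖) ‖v‖]
  have hcancel : (1 - β * η) * (‖v‖ ^ 2 / (2 * η)) + β / 2 * ‖v‖ ^ 2 = ‖v‖ ^ 2 / (2 * η) := by
    field_simp; ring
  linarith [mul_le_mul_of_nonneg_left hyoung (sub_nonneg.2 hβη)]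

end Descent

theorem summable_of_add_le_add {u a b : ℕ → ℝ} (hu : BddBelow (Set.range u))
    (ha : ∀ n, 0 ≤ a n) (hb : Summable b) (h : ∀ n, u (n + 1) + a n ≤ u n + b n) :
    Summable a := by
  obtain ⟨m, hm⟩ := hu
  obtain ⟨B, hB⟩ := hb.hasSum.tendsto_sum_nat.bddAbove_range
  refine summable_of_sum_range_le ha (c := u 0 - m + B) fun n => ?_
  calc ∑ i ∈ range n, a i ≤ ∑ i ∈ range n, (u i - u (i + 1) + b i) :=
        sum_le_sum fun i _ => by linarith [h i]
    _ = u 0 - u n + ∑ i ∈ range n, b i := by rw [sum_add_distrib, sum_range_sub']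
    _ ≤ u 0 - m + B := by linarith [hm (Set.mem_range_self n), hB (Set.mem_range_self n)]

theorem tendsto_zero_of_summable_norm_sq {E : Type*} [SeminormedAddCommGroup E] {g : ℕ → E}
    (hg : Summable fun n => ‖g n‖ ^ 2) : Tendsto g atTop (nhds 0) := by
  rw [tendsto_zero_iff_norm_tendsto_zero]
  simpa using hg.tendsto_atTop_zero.sqrt

theorem stmt_1 {d : ℕ} (f : EuclideanSpace ℝ (Fin d) → ℝ) (β η : ℝ) (hβ : 0 < β)
    (hf : Differentiable ℝ f)
    (hlip : ∀ x y, ‖gradient f x - gradient f y‖ ≤ β * ‖x - y‖)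
    (hbdd : BddBelow (Set.range f))
    (hη0 : 0 < η) (hηβ : η < 1 / β)
    (v x : ℕ → EuclideanSpace ℝ (Fin d))
    (hv : Summable (fun t => ‖v t‖ ^ 2))
    (hx : ∀ t, x (t + 1) = x t - η • gradient f (x t) + v t) :
    Tendsto (fun t => gradient f (x t)) atTop (nhds 0) := by
  have hβη : β * η ≤ 1 := by
    rw [lt_div_iff₀ hβ] at hηβ; linarith
  have hstep (t : ℕ) :
      f (x (t + 1)) + η / 2 * ‖∇ f (x t)‖ ^ 2 ≤ f (x t) + ‖v t‖ ^ 2 / (2 * η) :=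
    hx t ▸ image_gradient_step_add_le hf hlip hη0 hβη (x t) (v t)
  have hsum : Summable fun t => η / 2 * ‖∇ f (x t)‖ ^ 2 :=
    summable_of_add_le_add (hbdd.mono (Set.range_comp_subset_range x f))
      (fun t => by positivity) (hv.div_const _) hstep
  exact tendsto_zero_of_summable_norm_sq ((summable_mul_left_iff (by positivity)).1 hsum)
end
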